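/- Fix 0 < λ ≤ 1, K ≥ 0 and real numbers a < b < c < d. Let ξ : ℝ² → ℂ satisfy |ξ(p) − ξ(q)| ≤ K·|p − q|^λ for all p, q, and ξ(x,y) = 0 whenever (x,y) ∉ [a,b] × [c,d]. Then the function Φ(u,v) = ∬_{[a,b]×[c,d]} ξ(x,y) · c(u,v,x,y) · (x − y)^{-2} dx dy is continuous on { (u,v) ∈ ℝ² : u ≠ v }. -/

import Mathlib

/-!
The crossing cosine is bounded by `1`, and for a fixed geodesic `h = (x, y)` it is continuous in
`g` except where `g` and `h` share an endpoint; for fixed `g` this happens only for `h` on four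
lines, a Lebesgue-null set. Since `b < c`, the box stays away from the diagonal, so `ξ` (Hölder,
hence continuous) times the Liouville density is continuous on the compact box and thus
integrable there; dominated convergence then gives continuity, even on all of `ℝ × ℝ`.
-/

open MeasureTheory

/-- The cosine of the intersection angle of the hyperbolic geodesics with ideal
endpoints `{u,v}` and `{x,y}`, set to `0` if they do not intersect. -/
noncomputable def crossCos (u v x y : ℝ) : ℝ :=
  if (u - x) * (u - y) * (v - x) * (v - y) < 0 then
    ((u + v) * (x + y) - 2 * u * v - 2 * x * y) / ((u - v) * (x - y))
  else 0

lemma crossCos_eq (u v x y : ℝ) :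
    crossCos u v x y =
      if (u - x) * (v - y) * ((u - y) * (v - x)) < 0 then
        -((u - x) * (v - y) + (u - y) * (v - x)) / ((u - x) * (v - y) - (u - y) * (v - x))
      else 0 := by
  unfold crossCos
  congr 1
  · ring_nf
  · congr 1 <;> ring

lemma abs_crossCos_le_one (u v x y : ℝ) : |crossCos u v x y| ≤ 1 := by
  rw [crossCos_eq]
  split_ifs with hlinked
  · rw [abs_div, abs_neg]
    refine div_le_one_of_le₀ (sq_le_sq.mp ?_) (abs_nonneg _)
    nlinarith
  · simp

lemma measurable_crossCos (u v : ℝ) : Measurable fun p : ℝ × ℝ => crossCos u v p.1 p.2 :=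
  Measurable.ite (measurableSet_lt (by fun_prop) measurable_const) (by fun_prop) measurable_const

lemma sub_mul_sub_ne_zero_of_linked {u v x y : ℝ}
    (h : (u - x) * (u - y) * (v - x) * (v - y) < 0) : (u - v) * (x - y) ≠ 0 := by
  have hprod : (u - x) * (u - y) * (v - x) * (v - y) = (u - x) * (v - y) * ((u - y) * (v - x)) := by
    ring
  have hdiff : (u - v) * (x - y) = (u - x) * (v - y) - (u - y) * (v - x) := by ring
  rw [hdiff, sub_ne_zero]
  rintro heq
  rw [hprod, heq] at h
  exact (mul_self_nonneg _).not_gt h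

/-- Away from the lines where `g` and `(x, y)` share an endpoint, the sign of the linking
product is locally constant, so `crossCos` is locally either `0` or a rational function with
nonvanishing denominator. -/
lemma continuousAt_crossCos {u v x y : ℝ} (h : (u - x) * (u - y) * (v - x) * (v - y) ≠ 0) :
    ContinuousAt (fun g : ℝ × ℝ => crossCos g.1 g.2 x y) (u, v) := by
  have hP : Continuous fun g : ℝ × ℝ => (g.1 - x) * (g.1 - y) * (g.2 - x) * (g.2 - y) := by
    fun_prop
  rcases h.lt_or_gt with hneg | hpos
  · have hlinked : ∀ᶠ g : ℝ × ℝ in nhds (u, v),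
        (g.1 - x) * (g.1 - y) * (g.2 - x) * (g.2 - y) < 0 :=
      hP.continuousAt.eventually_lt continuousAt_const hneg
    refine ContinuousAt.congr ?_ (hlinked.mono fun g hg => (if_pos hg).symm)
    exact ContinuousAt.div (by fun_prop) (by fun_prop) (sub_mul_sub_ne_zero_of_linked hneg)
  · have hunlinked : ∀ᶠ g : ℝ × ℝ in nhds (u, v),
        0 < (g.1 - x) * (g.1 - y) * (g.2 - x) * (g.2 - y) :=
      continuousAt_const.eventually_lt hP.continuousAt hpos
    exact continuousAt_const.congr (hunlinked.mono fun g hg => (if_neg hg.not_gt).symm)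

lemma continuous_of_norm_sub_le_mul_dist_rpow {X E : Type*} [PseudoMetricSpace X]
    [SeminormedAddCommGroup E] {f : X → E} {K lam : ℝ} (hlam : 0 < lam)
    (hf : ∀ p q, ‖f p - f q‖ ≤ K * dist p q ^ lam) : Continuous f := by
  refine continuous_iff_continuousAt.mpr fun p => tendsto_iff_norm_sub_tendsto_zero.mpr ?_
  have hbound : Filter.Tendsto (fun q => K * dist q p ^ lam) (nhds p) (nhds 0) := by
    have hdist := (continuous_id.dist (continuous_const (y := p))).tendsto p
    simpa [Real.zero_rpow hlam.ne'] using
      ((Real.continuousAt_rpow_const _ lam (Or.inr hlam.le)).tendsto.comp hdist).const_mul K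
  exact squeeze_zero (fun _ => norm_nonneg _) (fun q => hf q p) hbound

lemma ae_fst_notMem_and_snd_notMem {α β : Type*} [MeasurableSpace α] [MeasurableSpace β]
    {μ : Measure α} {ν : Measure β} [SFinite ν] [NullSingletonClass μ] [NullSingletonClass ν]
    {s : Set α} {t : Set β} (hs : s.Countable) (ht : t.Countable) :
    ∀ᵐ p ∂μ.prod ν, p.1 ∉ s ∧ p.2 ∉ t :=
  (Measure.quasiMeasurePreserving_fst.ae
      (measure_eq_zero_iff_ae_notMem.mp (hs.measure_zero μ))).and
    (Measure.quasiMeasurePreserving_snd.ae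
      (measure_eq_zero_iff_ae_notMem.mp (ht.measure_zero ν)))

theorem continuous_integral_mul_crossCos {f : ℝ × ℝ → ℂ} {s : Set (ℝ × ℝ)}
    (hf : IntegrableOn f s) :
    Continuous fun g : ℝ × ℝ =>
      ∫ p in s, f p * ((crossCos g.1 g.2 p.1 p.2 : ℝ) : ℂ) := by
  refine continuous_iff_continuousAt.mpr fun g₀ =>
    continuousAt_of_dominated (bound := fun p => ‖f p‖) ?_ ?_ hf.norm ?_
  · exact Filter.Eventually.of_forall fun g => hf.aestronglyMeasurable.mul
      (Complex.measurable_ofReal.comp (measurable_crossCos g.1 g.2)).aestronglyMeasurable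
  · refine Filter.Eventually.of_forall fun g => ae_of_all _ fun p => ?_
    rw [norm_mul, Complex.norm_real, Real.norm_eq_abs]
    exact mul_le_of_le_one_right (norm_nonneg _) (abs_crossCos_le_one _ _ _ _)
  · have hends : ({g₀.1, g₀.2} : Set ℝ).Countable := (Set.toFinite _).countable
    filter_upwards [ae_restrict_of_ae (ae_fst_notMem_and_snd_notMem hends hends)]
      with p ⟨hx, hy⟩
    simp only [Set.mem_insert_iff, Set.mem_singleton_iff, not_or] at hx hy
    have hprod : (g₀.1 - p.1) * (g₀.1 - p.2) * (g₀.2 - p.1) * (g₀.2 - p.2) ≠ 0 := by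
      simp only [ne_eq, mul_eq_zero, sub_eq_zero, not_or]
      exact ⟨⟨⟨Ne.symm hx.1, Ne.symm hy.1⟩, Ne.symm hx.2⟩, Ne.symm hy.2⟩
    exact continuousAt_const.mul
      (Complex.continuous_ofReal.continuousAt.comp (continuousAt_crossCos hprod))

theorem crossCos_integral_continuous_general
    (lam K : ℝ) (hlam0 : 0 < lam)
    (a b c d : ℝ) (hbc : b < c)
    (ξ : ℝ × ℝ → ℂ)
    (hHolder : ∀ p q : ℝ × ℝ, ‖ξ p - ξ q‖ ≤ K * dist p q ^ lam) :
    ContinuousOn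
      (fun g : ℝ × ℝ => ∫ p in Set.Icc a b ×ˢ Set.Icc c d,
        ξ p * ((crossCos g.1 g.2 p.1 p.2 : ℝ) : ℂ) * ((((p.1 - p.2) ^ 2)⁻¹ : ℝ) : ℂ))
      {g : ℝ × ℝ | g.1 ≠ g.2} := by
  have hξ : Continuous ξ := continuous_of_norm_sub_le_mul_dist_rpow hlam0 hHolder
  have hdiag : ∀ p ∈ Set.Icc a b ×ˢ Set.Icc c d, (p.1 - p.2) ^ 2 ≠ 0 := fun p hp =>
    pow_ne_zero 2 (sub_ne_zero.mpr (hp.1.2.trans_lt (hbc.trans_le hp.2.1)).ne)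
  have hint : IntegrableOn (fun p : ℝ × ℝ => ξ p * ((((p.1 - p.2) ^ 2)⁻¹ : ℝ) : ℂ))
      (Set.Icc a b ×ˢ Set.Icc c d) :=
    ContinuousOn.integrableOn_compact (isCompact_Icc.prod isCompact_Icc) <|
      hξ.continuousOn.mul <| Complex.continuous_ofReal.comp_continuousOn <|
        ContinuousOn.inv₀ (by fun_prop) hdiag
  refine (continuous_integral_mul_crossCos hint).continuousOn.congr fun g _ => ?_
  exact integral_congr_ae (ae_of_all _ fun p => mul_right_comm _ _ _)

/-- `g ↦ ∫ ξ(h) cos(g,h) dL(h)` is a continuous function of the geodesic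
`g = (u,v)`. -/
theorem crossCos_integral_continuous
    (lam K : ℝ) (hlam0 : 0 < lam) (hlam1 : lam ≤ 1) (hK : 0 ≤ K)
    (a b c d : ℝ) (hab : a < b) (hbc : b < c) (hcd : c < d)
    (ξ : ℝ × ℝ → ℂ)
    (hHolder : ∀ p q : ℝ × ℝ, ‖ξ p - ξ q‖ ≤ K * dist p q ^ lam)
    (hsupp : ∀ x y : ℝ, (x, y) ∉ Set.Icc a b ×ˢ Set.Icc c d → ξ (x, y) = 0) :
    ContinuousOn
      (fun g : ℝ × ℝ => ∫ p in Set.Icc a b ×ˢ Set.Icc c d,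
        ξ p * ((crossCos g.1 g.2 p.1 p.2 : ℝ) : ℂ) * ((((p.1 - p.2) ^ 2)⁻¹ : ℝ) : ℂ))
      {g : ℝ × ℝ | g.1 ≠ g.2} :=
  crossCos_integral_continuous_general lam K hlam0 a b c d hbc ξ hHolder
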